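/- For any n×n complex matrix A and any nonzero v ∈ ℂⁿ, if the span of {v, Av, A*v} has dimension ≤ 2 and v is not a common eigenvector of A and A*, and n = 3, then A is unitarily tridiagonalisable. -/

import Mathlib

/-!
The subspace `W = span {v, A v, Aᴴ v}` of `ℂ³` is proper, so it has a unit normal `w`. In an
orthonormal basis starting with `v / ‖v‖` and ending with `w`, the two corner entries of `A` are,
up to scaling, `⟪w, A v⟫ = 0` and `⟪v, A w⟫ = ⟪Aᴴ v, w⟫ = 0`; for a `3 × 3` matrix these are
the only entries that tridiagonality constrains.
-/

open Matrix

/-- A matrix is tridiagonal if all entries with |i-j| ≥ 2 vanish. -/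
def IsTridiagonal {n : ℕ} (B : Matrix (Fin n) (Fin n) ℂ) : Prop :=
  ∀ i j : Fin n, 2 ≤ |(i : ℤ) - (j : ℤ)| → B i j = 0

/-- A is unitarily tridiagonalisable. -/
def IsUnitarilyTridiagonalisable {n : ℕ} (A : Matrix (Fin n) (Fin n) ℂ) : Prop :=
  ∃ U ∈ Matrix.unitaryGroup (Fin n) ℂ, IsTridiagonal (U * A * Uᴴ)

open scoped InnerProductSpace
open Module

section
variable {𝕜 E : Type*} [RCLike 𝕜] [NormedAddCommGroup E] [InnerProductSpace 𝕜 E]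
  [FiniteDimensional 𝕜 E]

theorem OrthonormalBasis.exists_fin_three_of_orthonormal (hE : finrank 𝕜 E = 3) {u w : E}
    (hu : ‖u‖ = 1) (hw : ‖w‖ = 1) (huw : ⟪u, w⟫_𝕜 = 0) :
    ∃ b : OrthonormalBasis (Fin 3) 𝕜 E, b 0 = u ∧ b 2 = w := by
  have horth : Orthonormal 𝕜 (({0, 2} : Set (Fin 3)).domRestrict ![u, 0, w]) := by
    rw [orthonormal_iff_ite]
    rintro ⟨i, hi⟩ ⟨j, hj⟩
    simp only [Set.mem_insert_iff, Set.mem_singleton_iff] at hi hj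
    rcases hi with rfl | rfl <;> rcases hj with rfl | rfl <;>
      simp [Set.domRestrict, hu, hw, huw, inner_eq_zero_symm.mp huw, inner_self_eq_norm_sq_to_K]
  obtain ⟨b, hb⟩ := horth.exists_orthonormalBasis_extension_of_card_eq (by simpa using hE)
  exact ⟨b, hb 0 (by simp), hb 2 (by simp)⟩

theorem exists_orthonormalBasis_fin_three_inner_eq_zero_of_finrank_span_le_two
    (hE : finrank 𝕜 E = 3) (T : E →ₗ[𝕜] E) {x : E} (hx : x ≠ 0)
    (hW : finrank 𝕜 (Submodule.span 𝕜 {x, T x, LinearMap.adjoint T x}) ≤ 2) :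
    ∃ b : OrthonormalBasis (Fin 3) 𝕜 E, ⟪b 2, T (b 0)⟫_𝕜 = 0 ∧ ⟪b 0, T (b 2)⟫_𝕜 = 0 := by
  set W := Submodule.span 𝕜 {x, T x, LinearMap.adjoint T x}
  obtain ⟨y, hyW, hy⟩ : ∃ y ∈ Wᗮ, y ≠ 0 := by
    refine Submodule.exists_mem_ne_zero_of_ne_bot fun h ↦ ?_
    have := Submodule.finrank_add_finrank_orthogonal W
    rw [h, finrank_bot] at this
    omega
  have hperp : ∀ z ∈ W, ⟪z, y⟫_𝕜 = 0 := (Submodule.mem_orthogonal W y).mp hyW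
  obtain ⟨b, hb0, hb2⟩ := OrthonormalBasis.exists_fin_three_of_orthonormal hE
    (norm_smul_inv_norm (𝕜 := 𝕜) hx) (norm_smul_inv_norm (𝕜 := 𝕜) hy)
    (by simp [inner_smul_left, inner_smul_right, hperp x (Submodule.subset_span (by simp))])
  refine ⟨b, ?_, ?_⟩
  · rw [hb0, hb2, map_smul, inner_smul_left, inner_smul_right, inner_eq_zero_symm.mp
      (hperp _ (Submodule.subset_span (by simp))), mul_zero, mul_zero]
  · rw [hb0, hb2, ← LinearMap.adjoint_inner_left, map_smul, inner_smul_left, inner_smul_right,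
      hperp _ (Submodule.subset_span (by simp)), mul_zero, mul_zero]

end

theorem OrthonormalBasis.conjTranspose_toMatrix_mul_mul_toMatrix_apply {𝕜 ι : Type*} [RCLike 𝕜]
    [Fintype ι] [DecidableEq ι] (b : OrthonormalBasis ι 𝕜 (EuclideanSpace 𝕜 ι))
    (A : Matrix ι ι 𝕜) (i j : ι) :
    (((EuclideanSpace.basisFun ι 𝕜).toBasis.toMatrix b)ᴴ * A *
      (EuclideanSpace.basisFun ι 𝕜).toBasis.toMatrix b) i j =
      ⟪b i, Matrix.toEuclideanLin A (b j)⟫_𝕜 := by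
  simp only [Matrix.mul_apply, Matrix.conjTranspose_apply, Basis.toMatrix_apply,
    OrthonormalBasis.coe_toBasis_repr_apply, EuclideanSpace.basisFun_repr, Matrix.toLpLin_apply,
    PiLp.inner_apply, RCLike.inner_apply, Matrix.mulVec, dotProduct, Finset.sum_mul]
  rw [Finset.sum_comm]
  exact Finset.sum_congr rfl fun _ _ ↦ Finset.sum_congr rfl fun _ _ ↦ by
    rw [mul_assoc]; exact mul_comm _ _

theorem isUnitarilyTridiagonalisable_of_orthonormalBasis {n : ℕ} (A : Matrix (Fin n) (Fin n) ℂ)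
    (b : OrthonormalBasis (Fin n) ℂ (EuclideanSpace ℂ (Fin n)))
    (hb : ∀ i j : Fin n, 2 ≤ |(i : ℤ) - (j : ℤ)| → ⟪b i, Matrix.toEuclideanLin A (b j)⟫_ℂ = 0) :
    IsUnitarilyTridiagonalisable A := by
  set P := (EuclideanSpace.basisFun (Fin n) ℂ).toBasis.toMatrix b
  refine ⟨Pᴴ, Unitary.star_mem (OrthonormalBasis.toMatrix_orthonormalBasis_mem_unitary _ b),
    fun i j hij ↦ ?_⟩
  rw [conjTranspose_conjTranspose, b.conjTranspose_toMatrix_mul_mul_toMatrix_apply]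
  exact hb i j hij

theorem Fin.eq_zero_two_or_eq_two_zero_of_two_le_abs_sub {i j : Fin 3}
    (h : 2 ≤ |(i : ℤ) - (j : ℤ)|) : (i = 0 ∧ j = 2) ∨ (i = 2 ∧ j = 0) := by
  fin_cases i <;> fin_cases j <;> simp_all

theorem tridiagonalisable_three_of_dependent_noneigen_general
    (A : Matrix (Fin 3) (Fin 3) ℂ) (v : Fin 3 → ℂ) (hv : v ≠ 0)
    (hdep : Module.finrank ℂ
      (Submodule.span ℂ {v, A.mulVec v, Aᴴ.mulVec v} : Submodule ℂ (Fin 3 → ℂ)) ≤ 2) :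
    IsUnitarilyTridiagonalisable A := by
  set T := Matrix.toEuclideanLin A
  have hspan_eq : Submodule.span ℂ {WithLp.toLp 2 v, T (WithLp.toLp 2 v),
      LinearMap.adjoint T (WithLp.toLp 2 v)} =
      (Submodule.span ℂ {v, A.mulVec v, Aᴴ.mulVec v}).map
        ((WithLp.linearEquiv 2 ℂ (Fin 3 → ℂ)).symm : (Fin 3 → ℂ) →ₗ[ℂ] _) := by
    rw [Submodule.map_span, ← Matrix.toEuclideanLin_conjTranspose_eq_adjoint]
    simp [T, Set.image_insert_eq]
  obtain ⟨b, hb20, hb02⟩ :=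
    exists_orthonormalBasis_fin_three_inner_eq_zero_of_finrank_span_le_two
      finrank_euclideanSpace_fin T (x := WithLp.toLp 2 v) (by simpa using hv)
      (by rwa [hspan_eq, LinearEquiv.finrank_map_eq])
  refine isUnitarilyTridiagonalisable_of_orthonormalBasis A b fun i j hij ↦ ?_
  rcases Fin.eq_zero_two_or_eq_two_zero_of_two_le_abs_sub hij with ⟨rfl, rfl⟩ | ⟨rfl, rfl⟩
  · exact hb02
  · exact hb20

theorem tridiagonalisable_three_of_dependent_noneigen
    (A : Matrix (Fin 3) (Fin 3) ℂ) (v : Fin 3 → ℂ) (hv : v ≠ 0)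
    (hdep : Module.finrank ℂ
      (Submodule.span ℂ {v, A.mulVec v, Aᴴ.mulVec v} : Submodule ℂ (Fin 3 → ℂ)) ≤ 2)
    (hnotcommon : ¬ ((∃ μ : ℂ, A.mulVec v = μ • v) ∧ (∃ ν : ℂ, Aᴴ.mulVec v = ν • v))) :
    IsUnitarilyTridiagonalisable A :=
  tridiagonalisable_three_of_dependent_noneigen_general A v hv hdep
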